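/- For all n ≥ 1, the FiboCatalan number C_{n,F} = (1/F_{n+1}) · binom(2n,n)_F is a positive integer; equivalently, F_{n+1} divides the central fibonomial coefficient binom(2n,n)_F. -/
import Mathlib


/-- The Fibonacci factorial `F_n! = F_n · F_{n-1} · ⋯ · F_1`, with `F_0! = 1`. -/
def fibFact : ℕ → ℕ
  | 0 => 1
  | n + 1 => Nat.fib (n + 1) * fibFact n

/-- The fibonomial coefficient `binom(n,k)_F = F_n!/(F_k!·F_{n-k}!)` for `0 ≤ k ≤ n`,
and `0` otherwise. Indices are integers so that negative arguments make sense. -/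
def fibBinom (n k : ℤ) : ℕ :=
  if 0 ≤ k ∧ k ≤ n then fibFact n.toNat / (fibFact k.toNat * fibFact (n - k).toNat) else 0

/-- Natural-number fibonomial via a Pascal-like recurrence. -/
def fb : ℕ → ℕ → ℕ
  | _, 0 => 1
  | 0, _ + 1 => 0
  | n + 1, k + 1 =>
      Nat.fib (k + 2) * fb n (k + 1) + (if k + 1 ≤ n then Nat.fib (n - k - 1) else 1) * fb n k

lemma fibFact_pos (n : ℕ) : 0 < fibFact n := by
  induction n with
  | zero => simp [fibFact]
  | succ n ih => exact Nat.mul_pos (Nat.fib_pos.mpr n.succ_pos) ih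

lemma fb_eq_zero : ∀ n k : ℕ, n < k → fb n k = 0
  | _, 0, h => absurd h (Nat.not_lt_zero _)
  | 0, k + 1, _ => rfl
  | n + 1, k + 1, h => by
      have h1 : fb n (k + 1) = 0 := fb_eq_zero n (k + 1) (Nat.lt_of_succ_lt_succ h |>.trans (Nat.lt_succ_self _))
      have h2 : fb n k = 0 := fb_eq_zero n k (Nat.lt_of_succ_lt_succ h)
      simp [fb, h1, h2]

lemma fb_mul : ∀ n k j : ℕ, n = k + j → fb n k * (fibFact k * fibFact j) = fibFact n
  | n, 0, j, h => by subst h; simp [fb, fibFact]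
  | 0, k + 1, j, h => by omega
  | n + 1, k + 1, j, h => by
      cases j with
      | zero =>
        obtain rfl : n = k := by omega

        have h0 : fb n (n + 1) = 0 := fb_eq_zero n (n + 1) (Nat.lt_succ_self n)
        have ih := fb_mul n n 0 rfl
        simp only [fb, h0, Nat.mul_zero, if_neg (Nat.not_succ_le_self n), Nat.zero_add,
          Nat.one_mul]
        show fb n n * (fibFact (n + 1) * fibFact 0) = fibFact (n + 1)
        simp only [fibFact] at *
        calc fb n n * (Nat.fib (n + 1) * fibFact n * 1)
            = Nat.fib (n + 1) * (fb n n * (fibFact n * 1)) := by ring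
          _ = Nat.fib (n + 1) * fibFact n := by rw [ih]
      | succ j' =>
        have hkn : k + 1 ≤ n := by omega
        have hsub : n - k - 1 = j' := by omega
        have ih1 := fb_mul n (k + 1) j' (by omega)
        have ih2 := fb_mul n k (j' + 1) (by omega)
        have hfib : Nat.fib (n + 1) =
            Nat.fib (k + 1) * Nat.fib j' + Nat.fib (k + 2) * Nat.fib (j' + 1) := by
          have := Nat.fib_add (k + 1) j'
          rwa [show k + 1 + j' + 1 = n + 1 by omega] at this
        simp only [fb, if_pos hkn, hsub]
        show (Nat.fib (k + 2) * fb n (k + 1) + Nat.fib j' * fb n k) *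
            (fibFact (k + 1) * fibFact (j' + 1)) = fibFact (n + 1)
        have e1 : fibFact (j' + 1) = Nat.fib (j' + 1) * fibFact j' := rfl
        have e2 : fibFact (k + 1) = Nat.fib (k + 1) * fibFact k := rfl
        calc (Nat.fib (k + 2) * fb n (k + 1) + Nat.fib j' * fb n k) *
              (fibFact (k + 1) * fibFact (j' + 1))
            = Nat.fib (k + 2) * Nat.fib (j' + 1) * (fb n (k + 1) * (fibFact (k + 1) * fibFact j'))
              + Nat.fib j' * Nat.fib (k + 1) * (fb n k * (fibFact k * fibFact (j' + 1))) := by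
              rw [e1, e2]; ring
          _ = Nat.fib (k + 2) * Nat.fib (j' + 1) * fibFact n
              + Nat.fib j' * Nat.fib (k + 1) * fibFact n := by rw [ih1, ih2]
          _ = Nat.fib (n + 1) * fibFact n := by rw [hfib]; ring
          _ = fibFact (n + 1) := rfl

theorem fiboCatalan_pos_int (n : ℕ) (hn : 1 ≤ n) :
    Nat.fib (n + 1) ∣ fibBinom (2 * n) n ∧ 0 < fibBinom (2 * n) n / Nat.fib (n + 1) := by
  obtain ⟨m, rfl⟩ : ∃ m, n = m + 1 := ⟨n - 1, by omega⟩
  set n := m + 1 with hn_def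
  -- identify fibBinom with fb
  have hA := fb_mul (2 * n) n n (by omega)
  have hB := fb_mul (2 * n) m (m + 2) (by omega)
  have hbinom : fibBinom (2 * n) n = fb (2 * n) n := by
    have hcond : (0 : ℤ) ≤ (n : ℤ) ∧ (n : ℤ) ≤ 2 * (n : ℤ) := by constructor <;> omega
    rw [fibBinom]
    rw [if_pos (by push_cast; constructor <;> omega)]
    have h1 : ((2 * (n : ℕ) : ℕ) : ℤ).toNat = 2 * n := by omega
    have h2 : ((n : ℤ)).toNat = n := by omega
    have h3 : ((2 * (n : ℕ) : ℕ) : ℤ) - (n : ℤ) = ((n : ℕ) : ℤ) := by push_cast; ring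
    rw [show ((2 * n : ℤ)) = ((2 * n : ℕ) : ℤ) by push_cast; ring] at *
    rw [h3, h1, h2]
    exact Nat.div_eq_of_eq_mul_left
      (Nat.mul_pos (fibFact_pos n) (fibFact_pos n)) hA.symm
  -- key identity: fib n * fb (2n) n = fib (n+1) * fb (2n) m
  have key : Nat.fib n * fb (2 * n) n = Nat.fib (n + 1) * fb (2 * n) m := by
    have hmult : 0 < fibFact n * fibFact n * Nat.fib (n + 1) :=
      Nat.mul_pos (Nat.mul_pos (fibFact_pos n) (fibFact_pos n)) (Nat.fib_pos.mpr (by omega))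
    apply Nat.eq_of_mul_eq_mul_right hmult
    have e1 : fibFact (m + 2) = Nat.fib (m + 2) * fibFact (m + 1) := rfl
    have e2 : fibFact (m + 1) = Nat.fib (m + 1) * fibFact m := rfl
    calc Nat.fib n * fb (2 * n) n * (fibFact n * fibFact n * Nat.fib (n + 1))
        = Nat.fib n * Nat.fib (n + 1) * (fb (2 * n) n * (fibFact n * fibFact n)) := by ring
      _ = Nat.fib n * Nat.fib (n + 1) * fibFact (2 * n) := by rw [hA]
      _ = Nat.fib n * Nat.fib (n + 1) * (fb (2 * n) m * (fibFact m * fibFact (m + 2))) := by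
          rw [hB]
      _ = Nat.fib (n + 1) * fb (2 * n) m * (fibFact n * fibFact n * Nat.fib (n + 1)) := by
          rw [hn_def] at *
          rw [e1, e2]; ring
  have hpos : 0 < fb (2 * n) n := by
    refine Nat.pos_of_ne_zero fun h => ?_
    rw [h, Nat.zero_mul] at hA
    exact (fibFact_pos (2 * n)).ne' hA.symm
  have hdvd : Nat.fib (n + 1) ∣ fb (2 * n) n := by
    have h1 : Nat.fib (n + 1) ∣ fb (2 * n) n * Nat.fib n := by
      rw [Nat.mul_comm, key]; exact Dvd.intro _ rfl
    exact (Nat.fib_coprime_fib_succ n).symm.dvd_of_dvd_mul_right h1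
  rw [hbinom]
  exact ⟨hdvd, Nat.div_pos (Nat.le_of_dvd hpos hdvd) (Nat.fib_pos.mpr (by omega))⟩
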